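/- For every ε > 0 and every paravector s ∈ ℝ^{d+1}, there exists ε_s > 0 such that [s] + U_{ε_s}(0) ⊆ { q ∈ ℝ^{d+1} : |q² - 2 s_0 q + |s|²| < ε² } ⊆ [s] + U_ε(0), where [s] = { s_0 + J|Im(s)| : J ∈ 𝕊 } is the (d-1)-sphere of s and U_r(0) is the open ball of radius r. -/

import Mathlib

noncomputable section

/-- Paravectors in ℝ^{d+1} are modelled as pairs `(q₀, qv)` of real part and
imaginary part; the Euclidean distance between paravectors. -/
def pDist {d : ℕ} (p q : ℝ × (Fin d → ℝ)) : ℝ :=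
  Real.sqrt ((p.1 - q.1) ^ 2 + ∑ i, (p.2 i - q.2 i) ^ 2)

/-- The modulus `|q² - 2s₀q + |s|²|` of the paravector `q² - 2s₀q + |s|²`
(which has real part `q₀² - |qv|² - 2s₀q₀ + |s|²` and imaginary part
`2(q₀ - s₀)qv`). -/
def qPolyNorm {d : ℕ} (s q : ℝ × (Fin d → ℝ)) : ℝ :=
  Real.sqrt ((q.1 ^ 2 - ∑ i, q.2 i ^ 2 - 2 * s.1 * q.1
      + (s.1 ^ 2 + ∑ i, s.2 i ^ 2)) ^ 2
    + ∑ i, (2 * (q.1 - s.1) * q.2 i) ^ 2)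

/-- The `(d-1)`-sphere `[s] = {s₀ + J|Im s| : J ∈ 𝕊}` of a paravector `s`. -/
def pSphere {d : ℕ} (s : ℝ × (Fin d → ℝ)) : Set (ℝ × (Fin d → ℝ)) :=
  {t | t.1 = s.1 ∧ ∑ i, t.2 i ^ 2 = ∑ i, s.2 i ^ 2}

/-!
Attach to a paravector `q` the complex number `z = q₀ + i|q_v|`, and to `s` the number
`w = s₀ + i|s_v|`. The distance from `q` to the sphere `[s]` is `|z - w|`, and it is attained
(rotate `q_v` onto the sphere of radius `|s_v|`). In the plane `ℂ_J` containing `q`,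
`q² - 2s₀q + |s|² = (q - t)(q - t̄)`, so `|q² - 2s₀q + |s|²| = |z - w| |z - w̄|`, and
`|z - w| ≤ |z - w̄| ≤ |z - w| + 2|s_v|`. Hence the polynomial is below `ε²` as soon as the
distance `D` satisfies `D (D + 2|s_v|) < ε²`, and forces `D² < ε²`.
-/

open ComplexConjugate

lemma exists_norm_eq_and_norm_sub_eq_abs {E : Type*} [NormedAddCommGroup E] [NormedSpace ℝ E]
    (u w : E) : ∃ v : E, ‖v‖ = ‖w‖ ∧ ‖u - v‖ = |‖u‖ - ‖w‖| := by
  rcases eq_or_ne u 0 with rfl | hu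
  · exact ⟨w, rfl, by simp⟩
  have hu' : 0 < ‖u‖ := norm_pos_iff.2 hu
  refine ⟨(‖w‖ / ‖u‖) • u, ?_, ?_⟩
  · rw [norm_smul, Real.norm_of_nonneg (by positivity), div_mul_cancel₀ _ hu'.ne']
  · have hsub : u - (‖w‖ / ‖u‖) • u = (1 - ‖w‖ / ‖u‖) • u := by rw [sub_smul, one_smul]
    rw [hsub, norm_smul, Real.norm_eq_abs, ← abs_norm u, ← abs_mul, abs_norm,
      sub_mul, one_mul, div_mul_cancel₀ _ hu'.ne']

lemma exists_pos_mul_add_le {ε a : ℝ} (hε : 0 < ε) (ha : 0 ≤ a) :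
    ∃ δ, 0 < δ ∧ δ * (δ + a) ≤ ε ^ 2 := by
  refine ⟨ε ^ 2 / (ε + a), by positivity, ?_⟩
  have hδ : ε ^ 2 / (ε + a) ≤ ε := by
    rw [div_le_iff₀ (by positivity)]
    nlinarith
  calc ε ^ 2 / (ε + a) * (ε ^ 2 / (ε + a) + a) ≤ ε ^ 2 / (ε + a) * (ε + a) := by gcongr
    _ = ε ^ 2 := div_mul_cancel₀ _ (by positivity)

namespace Paravector

variable {d : ℕ}

abbrev imNorm (v : Fin d → ℝ) : ℝ := ‖WithLp.toLp 2 v‖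

lemma sum_sq_eq_imNorm_sq (v : Fin d → ℝ) : ∑ i, v i ^ 2 = imNorm v ^ 2 := by
  simp only [imNorm, EuclideanSpace.norm_sq_eq, Real.norm_eq_abs, sq_abs]

lemma pDist_eq (p q : ℝ × (Fin d → ℝ)) :
    pDist p q = √((p.1 - q.1) ^ 2 + imNorm (p.2 - q.2) ^ 2) := by
  rw [pDist, ← sum_sq_eq_imNorm_sq]
  rfl

lemma mem_pSphere_iff {s t : ℝ × (Fin d → ℝ)} :
    t ∈ pSphere s ↔ t.1 = s.1 ∧ imNorm t.2 = imNorm s.2 := by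
  simp only [pSphere, Set.mem_ofPred_eq, sum_sq_eq_imNorm_sq,
    sq_eq_sq₀ (norm_nonneg _) (norm_nonneg _)]

/-- A paravector `q = q₀ + J|q_v|` lies in the complex plane `ℂ_J`, where it is the image of
`q₀ + i|q_v|`; this complex number does not depend on the choice of `J`. -/
def toComplex (q : ℝ × (Fin d → ℝ)) : ℂ := ⟨q.1, imNorm q.2⟩

lemma toComplex_eq_of_mem_pSphere {s t : ℝ × (Fin d → ℝ)} (ht : t ∈ pSphere s) :
    toComplex t = toComplex s := by
  obtain ⟨h1, h2⟩ := mem_pSphere_iff.1 ht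
  simp only [toComplex, h1, h2]

lemma dist_toComplex (p q : ℝ × (Fin d → ℝ)) :
    dist (toComplex p) (toComplex q) = √((p.1 - q.1) ^ 2 + (imNorm p.2 - imNorm q.2) ^ 2) :=
  Complex.dist_eq_re_im _ _

lemma dist_toComplex_le_pDist (p q : ℝ × (Fin d → ℝ)) :
    dist (toComplex p) (toComplex q) ≤ pDist p q := by
  rw [dist_toComplex, pDist_eq]
  gcongr √(_ + ?_)
  rw [← sq_abs]
  gcongr
  simpa only [imNorm, WithLp.toLp_sub] using abs_norm_sub_norm_le _ _

lemma exists_mem_pSphere_pDist_eq (s q : ℝ × (Fin d → ℝ)) :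
    ∃ t ∈ pSphere s, pDist q t = dist (toComplex q) (toComplex s) := by
  obtain ⟨v, hv, hqv⟩ :=
    exists_norm_eq_and_norm_sub_eq_abs (WithLp.toLp 2 q.2) (WithLp.toLp 2 s.2)
  refine ⟨(s.1, v.ofLp), mem_pSphere_iff.2 ⟨rfl, hv⟩, ?_⟩
  rw [pDist_eq, dist_toComplex, imNorm, WithLp.toLp_sub, WithLp.toLp_ofLp, hqv, sq_abs]

/-- The factorization `q² - 2s₀q + |s|² = (q - t)(q - t̄)` in `ℂ_J`, with `t = s₀ + J|s_v|`. -/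
lemma qPolyNorm_eq_dist_mul_dist (s q : ℝ × (Fin d → ℝ)) :
    qPolyNorm s q =
      dist (toComplex q) (toComplex s) * dist (toComplex q) (conj (toComplex s)) := by
  rw [dist_eq_norm, dist_eq_norm, ← norm_mul, Complex.norm_def, Complex.normSq_apply, qPolyNorm]
  congr 1
  have hsum : ∑ i, (2 * (q.1 - s.1) * q.2 i) ^ 2 = 4 * (q.1 - s.1) ^ 2 * ∑ i, q.2 i ^ 2 := by
    rw [Finset.mul_sum]
    exact Finset.sum_congr rfl fun i _ => by ring
  simp only [hsum, sum_sq_eq_imNorm_sq, toComplex, Complex.mul_re, Complex.mul_im,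
    Complex.sub_re, Complex.sub_im, Complex.conj_re, Complex.conj_im]
  ring

end Paravector

namespace Complex

lemma dist_le_dist_conj_of_im_nonneg {z w : ℂ} (hz : 0 ≤ z.im) (hw : 0 ≤ w.im) :
    dist z w ≤ dist z (conj w) := by
  rw [dist_eq_re_im, dist_eq_re_im, conj_re, conj_im]
  apply Real.sqrt_le_sqrt
  nlinarith [mul_nonneg hz hw]

lemma dist_conj_le_dist_add {z w : ℂ} (hw : 0 ≤ w.im) :
    dist z (conj w) ≤ dist z w + 2 * w.im := by
  calc dist z (conj w) ≤ dist z w + dist w (conj w) := dist_triangle _ _ _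
    _ = dist z w + 2 * w.im := by rw [dist_comm w, dist_conj_self, abs_of_nonneg hw]

end Complex

/-- for every `ε > 0` and every paravector `s` there exists
`ε_s > 0` with
`[s] + U_{ε_s}(0) ⊆ {q : |q² - 2s₀q + |s|²| < ε²} ⊆ [s] + U_ε(0)`. -/
theorem sphere_neighborhood_inclusions {d : ℕ} (ε : ℝ) (hε : 0 < ε)
    (s : ℝ × (Fin d → ℝ)) :
    ∃ εs : ℝ, 0 < εs ∧
      (∀ q : ℝ × (Fin d → ℝ), (∃ t ∈ pSphere s, pDist q t < εs) →
        qPolyNorm s q < ε ^ 2) ∧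
      (∀ q : ℝ × (Fin d → ℝ), qPolyNorm s q < ε ^ 2 →
        ∃ t ∈ pSphere s, pDist q t < ε) := by
  set w := Paravector.toComplex s
  have hw : 0 ≤ w.im := norm_nonneg _
  obtain ⟨δ, hδ, hδε⟩ := exists_pos_mul_add_le hε (by positivity : 0 ≤ 2 * w.im)
  refine ⟨δ, hδ, ?_, ?_⟩
  · rintro q ⟨t, ht, hqt⟩
    set z := Paravector.toComplex q
    have hzw : dist z w < δ :=
      calc dist z w = dist z (Paravector.toComplex t) := by
            rw [Paravector.toComplex_eq_of_mem_pSphere ht]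
        _ ≤ pDist q t := Paravector.dist_toComplex_le_pDist q t
        _ < δ := hqt
    rw [Paravector.qPolyNorm_eq_dist_mul_dist]
    calc dist z w * dist z (conj w) ≤ dist z w * (dist z w + 2 * w.im) := by
          gcongr
          exact Complex.dist_conj_le_dist_add hw
      _ < δ * (δ + 2 * w.im) := by gcongr
      _ ≤ ε ^ 2 := hδε
  · intro q hq
    set z := Paravector.toComplex q
    obtain ⟨t, ht, hqt⟩ := Paravector.exists_mem_pSphere_pDist_eq s q
    refine ⟨t, ht, hqt ▸ lt_of_pow_lt_pow_left₀ 2 hε.le ?_⟩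
    rw [Paravector.qPolyNorm_eq_dist_mul_dist] at hq
    calc dist z w ^ 2 = dist z w * dist z w := sq _
      _ ≤ dist z w * dist z (conj w) := by
          gcongr
          exact Complex.dist_le_dist_conj_of_im_nonneg (norm_nonneg _) hw
      _ < ε ^ 2 := hq
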